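/- Let n ≥ 2, λ ∈ (0,1), and γ ∈ [0,1) with λ < 1 − γ. Let T : [0,1] → [0,1] be piecewise C² expanding with contraction bound λ, and let T̂ be the globally coupled map on [0,1]^n built from T with coupling γ. Let h : [0,1]^n → [0,∞) be a continuous function with strictly positive infimum, and let μ be the Borel measure on [0,1]^n with density h with respect to Lebesgue measure. Then the limit lim_{ν→0⁺} μ(S_ν ∩ T̂^{−1}(S_ν)) / μ(S_ν) exists and equals (1−γ)^{−(n−1)} · (∫₀¹ h(x,…,x)·|T'(x)|^{−(n−1)} dx) / (∫₀¹ h(x,…,x) dx), where T'(x) is defined at Lebesgue-almost every x ∈ [0,1] (namely at all interior points of the partition intervals of T). -/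

import Mathlib

/-!
Write a point of `[0,1]^n`, `n = m + 1`, as `x = (s, s + ν v₁, …, s + ν vₘ)`. Lebesgue measure
becomes `ν^m ds dv`, and for `ν > 0` the point lies in `S_ν` iff it lies in the cube and
`v ∈ Q`, the set where all pairwise differences of `(0, v)` are at most `1`. When `s` is inside a
branch of `T`, the condition `T̂ x ∈ S_ν` reads `(1-γ)|T xᵢ - T xⱼ| ≤ ν`; dividing by `ν`, it
becomes `v ∈ K⁻¹ • Q` in the limit, with `K = (1-γ)|T'(s)| ≥ (1-γ)/λ > 1`, except on the
boundary of `K⁻¹ • Q`, which lies in finitely many hyperplanes. Since `|K⁻¹ • Q| = K^{-m} |Q|`,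
dominated convergence in `(s, v)` gives `ν^{-m} μ(S_ν ∩ T̂⁻¹ S_ν) → |Q| ∫ K(s)^{-m} h(s,…,s) ds`
and `ν^{-m} μ(S_ν) → |Q| ∫ h(s,…,s) ds`.
-/

open MeasureTheory Set Filter

/-- The globally coupled map `T̂` on `[0,1]^n` built from a local map `T` with
coupling strength `γ`: `T̂(x)_i = (1-γ)·T(x_i) + (γ/n)·∑_j T(x_j)`. -/
noncomputable def coupledMap (n : ℕ) (γ : ℝ) (T : ℝ → ℝ) :
    (Fin n → ℝ) → (Fin n → ℝ) :=
  fun x i => (1 - γ) * T (x i) + (γ / n) * ∑ j, T (x j)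

/-- The unit cube `[0,1]^n`. -/
def unitCube (n : ℕ) : Set (Fin n → ℝ) := {x | ∀ i, x i ∈ Icc (0:ℝ) 1}

/-- The synchronization neighborhood `S_ν = {x ∈ [0,1]^n : |x_i − x_j| ≤ ν ∀ i ≠ j}`. -/
def syncSet (n : ℕ) (ν : ℝ) : Set (Fin n → ℝ) :=
  {x ∈ unitCube n | ∀ i j, i ≠ j → |x i - x j| ≤ ν}

/-- `T : [0,1] → [0,1]` is piecewise `C²` expanding with contraction bound `lam`,
with partition points `a 0 = 0 < a 1 < ⋯ < a q = 1`. -/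
def PiecewiseC2Expanding (T : ℝ → ℝ) (lam : ℝ) (q : ℕ) (a : ℕ → ℝ) : Prop :=
  1 ≤ q ∧ a 0 = 0 ∧ a q = 1 ∧ (∀ l < q, a l < a (l + 1)) ∧
  (∀ l < q, Set.InjOn T (Ioo (a l) (a (l + 1)))) ∧
  (∀ l < q, ∃ g : ℝ → ℝ, ContDiff ℝ 2 g ∧ Set.EqOn T g (Ioo (a l) (a (l + 1)))) ∧
  (∀ l < q, ∀ x ∈ Ioo (a l) (a (l + 1)), 1 / lam ≤ |deriv T x|)

/-- The Borel measure on `[0,1]^n` with density `h` with respect to Lebesgue measure. -/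
noncomputable def densityMeasure (n : ℕ) (h : (Fin n → ℝ) → ℝ) : Measure (Fin n → ℝ) :=
  (volume.restrict (unitCube n)).withDensity fun x => ENNReal.ofReal (h x)

open Topology
open scoped Pointwise

theorem MeasureTheory.Measure.addHaar_preimage_singleton_linearMap {E : Type*}
    [NormedAddCommGroup E] [NormedSpace ℝ E] [MeasurableSpace E] [BorelSpace E]
    [FiniteDimensional ℝ E] (μ : Measure E) [μ.IsAddHaarMeasure] {L : E →ₗ[ℝ] ℝ} (hL : L ≠ 0)
    (r : ℝ) : μ (L ⁻¹' {r}) = 0 := by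
  obtain ⟨x, hx⟩ : ∃ x, L x ≠ 0 := by
    by_contra! h
    exact hL (LinearMap.ext h)
  have hfiber : L ⁻¹' {r} = (AffineSubspace.mk' ((r / L x) • x) (LinearMap.ker L) : Set E) := by
    ext y
    simp [AffineSubspace.mem_mk', sub_eq_zero, hx]
  rw [hfiber]
  refine Measure.addHaar_affineSubspace μ _ fun htop => hL ?_
  have hdir := congrArg AffineSubspace.direction htop
  rw [AffineSubspace.direction_mk', AffineSubspace.direction_top] at hdir
  exact LinearMap.ker_eq_top.mp hdir

theorem ContinuousOn.measurableSet_inter_preimage {α β : Type*} [TopologicalSpace α]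
    [MeasurableSpace α] [OpensMeasurableSpace α] [TopologicalSpace β] {f : α → β}
    {s : Set α} {t : Set β} (hf : ContinuousOn f s) (hs : IsOpen s) (ht : IsClosed t) :
    MeasurableSet (s ∩ f ⁻¹' t) := by
  have hopen := hf.isOpen_inter_preimage hs ht.isOpen_compl
  convert hs.measurableSet.diff hopen.measurableSet using 1
  ext x
  simp only [mem_inter_iff, mem_preimage, Set.mem_sdiff, mem_compl_iff]
  tauto

theorem eventually_le_iff_of_tendsto {α : Type*} {l : Filter α} {f : α → ℝ} {L c : ℝ}
    (hf : Tendsto f l (𝓝 L)) (hL : L ≠ c) : ∀ᶠ x in l, (f x ≤ c ↔ L ≤ c) := by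
  rcases hL.lt_or_gt with hlt | hgt
  · filter_upwards [hf.eventually_lt_const hlt] with x hx
    exact iff_of_true hx.le hlt.le
  · filter_upwards [hf.eventually_const_lt hgt] with x hx
    exact iff_of_false (not_le.mpr hx) (not_le.mpr hgt)

theorem HasDerivAt.tendsto_sub_div {T : ℝ → ℝ} {d s : ℝ} (hT : HasDerivAt T d s) (a b : ℝ) :
    Tendsto (fun ν => (T (s + ν * a) - T (s + ν * b)) / ν) (𝓝[>] 0) (𝓝 (d * (a - b))) := by
  have slope_along (w : ℝ) :
      Tendsto (fun ν => (T (s + ν * w) - T s) / ν) (𝓝[>] 0) (𝓝 (d * w)) := by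
    have hline : HasDerivAt (fun ν : ℝ => s + ν * w) w 0 := by
      simpa using ((hasDerivAt_id (0:ℝ)).mul_const w).const_add s
    have hcomp : HasDerivAt (fun ν => T (s + ν * w)) (d * w) 0 :=
      (by simpa using hT : HasDerivAt T d (s + 0 * w)).comp 0 hline
    refine ((hasDerivAt_iff_tendsto_slope.mp hcomp).mono_left
      (nhdsWithin_mono 0 fun _ hν => ne_of_gt hν)).congr fun ν => ?_
    simp [slope_def_field]
  rw [mul_sub]
  refine ((slope_along a).sub (slope_along b)).congr fun ν => ?_
  rw [div_sub_div_same, sub_sub_sub_cancel_right]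

theorem exists_mem_Ioo_of_forall_ne {a : ℕ → ℝ} {q : ℕ} {s : ℝ} (h0 : a 0 ≤ s) (hq : s < a q)
    (hne : ∀ l < q, a l ≠ s) : ∃ l < q, s ∈ Ioo (a l) (a (l + 1)) := by
  classical
  have hex : ∃ k, s < a k := ⟨q, hq⟩
  have hk : Nat.find hex ≠ 0 := fun h0' => (Nat.find_spec hex).not_ge (h0' ▸ h0)
  obtain ⟨l, hl⟩ := Nat.exists_eq_succ_of_ne_zero hk
  have hlq : l < q := by
    have := Nat.find_min' hex hq
    omega
  have hle : a l ≤ s := not_lt.mp (Nat.find_min hex (by omega))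
  exact ⟨l, hlq, (hle.lt_of_ne (hne l hlq)), by simpa [hl] using Nat.find_spec hex⟩

theorem ae_restrict_Icc_mem_Ioo (a b : ℝ) : ∀ᵐ s ∂volume.restrict (Icc a b), s ∈ Ioo a b := by
  rw [← Measure.restrict_congr_set Ioo_ae_eq_Icc]
  exact ae_restrict_mem measurableSet_Ioo

theorem unitCube_eq_pi (n : ℕ) : unitCube n = univ.pi fun _ => Icc 0 1 := by
  ext x
  exact mem_univ_pi.symm

theorem isCompact_unitCube (n : ℕ) : IsCompact (unitCube n) := by
  rw [unitCube_eq_pi]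
  exact isCompact_univ_pi fun _ => isCompact_Icc

theorem isClosed_syncSet (n : ℕ) (ν : ℝ) : IsClosed (syncSet n ν) := by
  refine (isCompact_unitCube n).isClosed.inter (s₂ := {x | ∀ i j, i ≠ j → |x i - x j| ≤ ν}) ?_
  simp only [Set.ofPred_forall]
  exact isClosed_iInter fun i => isClosed_iInter fun j => isClosed_iInter fun _ =>
    isClosed_le (by fun_prop) continuous_const

theorem ContinuousOn.exists_continuous_eqOn_unitCube {n : ℕ} {h : (Fin n → ℝ) → ℝ}
    (hh : ContinuousOn h (unitCube n)) :
    ∃ H, Continuous H ∧ EqOn h H (unitCube n) ∧ ∀ x, ∃ y ∈ unitCube n, H x = h y := by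
  let retract : (Fin n → ℝ) → Fin n → ℝ := fun x i => projIcc 0 1 zero_le_one (x i)
  have hmem (x) : retract x ∈ unitCube n := fun i => Subtype.prop _
  refine ⟨h ∘ retract, hh.comp_continuous (by fun_prop) hmem, fun x hx => ?_,
    fun x => ⟨_, hmem x, rfl⟩⟩
  simp [retract, projIcc_of_mem _ (hx _)]

theorem densityMeasure_congr {n : ℕ} {h H : (Fin n → ℝ) → ℝ} (hH : EqOn h H (unitCube n)) :
    densityMeasure n h = densityMeasure n H :=
  withDensity_congr_ae <| (ae_restrict_iff' (isCompact_unitCube n).measurableSet).mpr <|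
    ae_of_all _ fun x hx => by simp only [hH hx]

theorem densityMeasure_toReal_eq_integral {n : ℕ} {H : (Fin n → ℝ) → ℝ} (hH : Continuous H)
    (hH0 : ∀ x, 0 ≤ H x) {B : Set (Fin n → ℝ)} (hBm : MeasurableSet B) (hB : B ⊆ unitCube n) :
    (densityMeasure n H B).toReal = ∫ x, B.indicator H x := by
  have hint : IntegrableOn H B :=
    (hH.continuousOn.integrableOn_compact (isCompact_unitCube n)).mono_set hB
  rw [densityMeasure, withDensity_apply _ hBm, Measure.restrict_restrict hBm,
    inter_eq_self_of_subset_left hB, ← ofReal_integral_eq_lintegral_ofReal hint (ae_of_all _ hH0),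
    ENNReal.toReal_ofReal (integral_nonneg hH0), integral_indicator hBm]

theorem ae_restrict_unitCube_mem_pi {n : ℕ} {U : Set ℝ}
    (hU : ∀ᵐ s ∂volume.restrict (Icc 0 1), s ∈ U) :
    ∀ᵐ x ∂volume.restrict (unitCube n), x ∈ univ.pi fun _ => U := by
  rw [unitCube_eq_pi, volume_pi, Measure.restrict_pi_pi]
  simp only [mem_univ_pi]
  exact ae_all_iff.mpr fun i => Measure.tendsto_eval_ae_ae hU

theorem densityMeasure_inter_of_ae_mem {n : ℕ} (h : (Fin n → ℝ) → ℝ) (B : Set (Fin n → ℝ))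
    {Ω : Set (Fin n → ℝ)} (hΩ : ∀ᵐ x ∂volume.restrict (unitCube n), x ∈ Ω) :
    densityMeasure n h (B ∩ Ω) = densityMeasure n h B :=
  measure_inter_conull (ae_iff.mp ((withDensity_absolutelyContinuous _ _).ae_le hΩ))

section SyncChart

variable {m : ℕ}

def offsets : (Fin m → ℝ) →ₗ[ℝ] (Fin (m + 1) → ℝ) :=
  (Fin.consLinearEquiv ℝ fun _ => ℝ).toLinearMap ∘ₗ LinearMap.inr ℝ ℝ (Fin m → ℝ)

@[fun_prop] theorem continuous_offsets : Continuous (offsets : (Fin m → ℝ) →ₗ[ℝ] _) :=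
  LinearMap.continuous_of_finiteDimensional _

@[simp] theorem offsets_apply_zero (v : Fin m → ℝ) : offsets v 0 = 0 := rfl

@[simp] theorem offsets_apply_succ (v : Fin m → ℝ) (k : Fin m) : offsets v k.succ = v k := rfl

def syncChart (s ν : ℝ) (v : Fin m → ℝ) : Fin (m + 1) → ℝ :=
  fun i => s + ν * offsets v i

theorem syncChart_eq_cons (s ν : ℝ) (v : Fin m → ℝ) :
    syncChart s ν v = Fin.cons s ((fun _ => s) + ν • v) := by
  ext i
  cases i using Fin.cases <;> simp [syncChart]

theorem syncChart_sub (s ν : ℝ) (v : Fin m → ℝ) (i j : Fin (m + 1)) :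
    syncChart s ν v i - syncChart s ν v j = ν * (offsets v i - offsets v j) := by
  simp only [syncChart]
  ring

theorem measurable_syncChart (ν : ℝ) :
    Measurable fun p : ℝ × (Fin m → ℝ) => syncChart p.1 ν p.2 := by
  unfold syncChart
  fun_prop

theorem tendsto_syncChart (s : ℝ) (v : Fin m → ℝ) :
    Tendsto (fun ν => syncChart s ν v) (𝓝[>] 0) (𝓝 fun _ => s) := by
  have hcont : Continuous fun ν => syncChart s ν v := by
    unfold syncChart
    fun_prop
  have hzero : syncChart s 0 v = fun _ => s := by
    ext
    simp [syncChart]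
  exact hzero ▸ (hcont.tendsto 0).mono_left nhdsWithin_le_nhds

theorem eventually_syncChart_mem_unitCube {s : ℝ} (hs : s ∈ Ioo 0 1) (v : Fin m → ℝ) :
    ∀ᶠ ν in 𝓝[>] 0, syncChart s ν v ∈ unitCube (m + 1) := by
  have hopen : IsOpen (univ.pi fun _ : Fin (m + 1) => Ioo (0 : ℝ) 1) :=
    isOpen_set_pi finite_univ fun _ _ => isOpen_Ioo
  filter_upwards [tendsto_syncChart s v (hopen.mem_nhds fun i _ => hs)] with ν hν i
  exact Ioo_subset_Icc_self (hν i (mem_univ i))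

theorem integral_eq_pow_mul_integral_syncChart {F : (Fin (m + 1) → ℝ) → ℝ} (hF : Integrable F)
    {ν : ℝ} (hν : 0 < ν) : ∫ x, F x = ν ^ m * ∫ s, ∫ v, F (syncChart s ν v) := by
  have he := (volume_preserving_piFinSuccAbove (fun _ : Fin (m + 1) => ℝ) 0).symm
  have hcons : ∀ p : ℝ × (Fin m → ℝ),
      (MeasurableEquiv.piFinSuccAbove (fun _ => ℝ) 0).symm p = Fin.cons p.1 p.2 := by
    simp [MeasurableEquiv.piFinSuccAbove_symm_apply, Fin.insertNthEquiv, Fin.insertNth_zero']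
  have fiber (s : ℝ) : ∫ w, F (Fin.cons s w) = ν ^ m * ∫ v, F (syncChart s ν v) := by
    simp_rw [syncChart_eq_cons]
    rw [Measure.integral_comp_smul_of_nonneg volume (fun w => F (Fin.cons s ((fun _ => s) + w)))
      ν (hR := hν.le), integral_add_left_eq_self (fun w => F (Fin.cons s w)),
      Module.finrank_fin_fun, smul_eq_mul, mul_inv_cancel_left₀ (pow_pos hν m).ne']
  have hint :
      Integrable (fun p : ℝ × (Fin m → ℝ) => F (Fin.cons p.1 p.2)) (volume.prod volume) := by
    rw [← Measure.volume_eq_prod]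
    convert (he.integrable_comp_emb (MeasurableEquiv.measurableEmbedding _)).mpr hF using 2 with p
    exact congrArg F (hcons p).symm
  rw [← he.integral_comp (MeasurableEquiv.measurableEmbedding _), Measure.volume_eq_prod]
  simp_rw [hcons]
  rw [integral_prod _ hint]
  simp_rw [fiber, integral_const_mul]

theorem densityMeasure_toReal_eq_pow_mul_integral_syncChart {H : (Fin (m + 1) → ℝ) → ℝ}
    (hH : Continuous H) (hH0 : ∀ x, 0 ≤ H x) {B : Set (Fin (m + 1) → ℝ)} (hBm : MeasurableSet B)
    (hB : B ⊆ unitCube (m + 1)) {ν : ℝ} (hν : 0 < ν) :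
    (densityMeasure (m + 1) H B).toReal = ν ^ m * ∫ s, ∫ v, B.indicator H (syncChart s ν v) := by
  have hint : IntegrableOn H B :=
    (hH.continuousOn.integrableOn_compact (isCompact_unitCube _)).mono_set hB
  rw [densityMeasure_toReal_eq_integral hH hH0 hBm hB,
    integral_eq_pow_mul_integral_syncChart (hint.integrable_indicator hBm) hν]

def profileSet (m : ℕ) (r : ℝ) : Set (Fin m → ℝ) :=
  {v | ∀ i j, |offsets v i - offsets v j| ≤ r}

theorem syncChart_mem_syncSet_iff {s ν : ℝ} (hν : 0 < ν) (v : Fin m → ℝ) :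
    syncChart s ν v ∈ syncSet (m + 1) ν ↔
      syncChart s ν v ∈ unitCube (m + 1) ∧ v ∈ profileSet m 1 := by
  have hscale (i j : Fin (m + 1)) :
      |syncChart s ν v i - syncChart s ν v j| ≤ ν ↔ |offsets v i - offsets v j| ≤ 1 := by
    rw [syncChart_sub, abs_mul, abs_of_pos hν, mul_le_iff_le_one_right hν]
  refine and_congr_right fun _ => ⟨fun h i j => ?_, fun h i j _ => (hscale i j).mpr (h i j)⟩
  rcases eq_or_ne i j with rfl | hij
  · simp
  · exact (hscale i j).mp (h i j hij)

theorem isClosed_profileSet (m : ℕ) (r : ℝ) : IsClosed (profileSet m r) := by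
  simp only [profileSet, Set.ofPred_forall]
  exact isClosed_iInter fun i => isClosed_iInter fun j => isClosed_le (by fun_prop) (by fun_prop)

theorem profileSet_subset_pi (m : ℕ) (r : ℝ) : profileSet m r ⊆ univ.pi fun _ => Icc (-r) r :=
  fun v hv k _ => abs_le.mp (by simpa using hv k.succ 0)

theorem isCompact_profileSet (m : ℕ) (r : ℝ) : IsCompact (profileSet m r) :=
  (isCompact_univ_pi fun _ => isCompact_Icc).of_isClosed_subset (isClosed_profileSet m r)
    (profileSet_subset_pi m r)

theorem profileSet_eq_smul {r : ℝ} (hr : 0 < r) : profileSet m r = r • profileSet m 1 := by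
  ext v
  rw [mem_smul_set_iff_inv_smul_mem₀ hr.ne']
  refine forall₂_congr fun i j => ?_
  rw [map_smul, Pi.smul_apply, Pi.smul_apply, smul_eq_mul, smul_eq_mul, ← mul_sub, abs_mul,
    abs_of_pos (inv_pos.mpr hr), inv_mul_le_iff₀ hr, mul_one]

theorem volume_profileSet {r : ℝ} (hr : 0 < r) :
    volume (profileSet m r) = ENNReal.ofReal (r ^ m) * volume (profileSet m 1) := by
  rw [profileSet_eq_smul hr, Measure.addHaar_smul, Module.finrank_fin_fun,
    abs_of_pos (pow_pos hr m)]

theorem volume_profileSet_one_pos (m : ℕ) : 0 < volume (profileSet m 1) := by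
  have hcube : univ.pi (fun _ : Fin m => Icc (0 : ℝ) 1) ⊆ profileSet m 1 := by
    intro v hv i j
    have hmem : ∀ i, offsets v i ∈ Icc (0 : ℝ) 1 := fun i => by
      cases i using Fin.cases with
      | zero => simp
      | succ k => simpa using hv k (mem_univ k)
    exact abs_sub_le_of_nonneg_of_le (hmem i).1 (hmem i).2 (hmem j).1 (hmem j).2
  refine lt_of_lt_of_le ?_ (measure_mono hcube)
  simp [Real.volume_Icc_pi]

theorem ae_abs_offsets_sub_ne {r : ℝ} (hr : r ≠ 0) :
    ∀ᵐ v : Fin m → ℝ, ∀ i j, |offsets v i - offsets v j| ≠ r := by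
  have hlevel (i j : Fin (m + 1)) (hij : i ≠ j) (c : ℝ) :
      volume {v : Fin m → ℝ | offsets v i - offsets v j = c} = 0 := by
    let L := ((LinearMap.proj i : (Fin (m + 1) → ℝ) →ₗ[ℝ] ℝ) - LinearMap.proj j) ∘ₗ offsets
    have hL : L ≠ 0 := by
      -- `offsets` sends `k ↦ k + 1` to `i ↦ i`, which separates all coordinates.
      have hsep :
          offsets (fun k : Fin m => ((k : ℕ) : ℝ) + 1) = fun i : Fin (m + 1) => ((i : ℕ) : ℝ) := by
        ext i
        cases i using Fin.cases <;> simp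
      intro h0
      have := LinearMap.congr_fun h0 fun k : Fin m => ((k : ℕ) : ℝ) + 1
      simp only [L, LinearMap.comp_apply, hsep, LinearMap.sub_apply, LinearMap.proj_apply,
        LinearMap.zero_apply, sub_eq_zero, Nat.cast_inj] at this
      exact hij (Fin.ext this)
    exact Measure.addHaar_preimage_singleton_linearMap volume hL c
  refine ae_all_iff.mpr fun i => ae_all_iff.mpr fun j => ?_
  rcases eq_or_ne i j with rfl | hij
  · exact ae_of_all _ fun v => by simpa using hr.symm
  · filter_upwards [measure_eq_zero_iff_ae_notMem.mp (hlevel i j hij r),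
      measure_eq_zero_iff_ae_notMem.mp (hlevel i j hij (-r))] with v h1 h2 habs
    rcases abs_choice (offsets v i - offsets v j) with h | h
    · exact h1 (show _ = r by linarith)
    · exact h2 (show _ = -r by linarith)

end SyncChart

section FiberLimit

variable {m : ℕ} {H : (Fin (m + 1) → ℝ) → ℝ} {A : ℝ → Set (Fin (m + 1) → ℝ)}

theorem norm_indicator_syncChart_le {B : Set (Fin (m + 1) → ℝ)} {ν C : ℝ} (hν : 0 < ν)
    (hB : B ⊆ syncSet (m + 1) ν) (hC : ∀ x ∈ unitCube (m + 1), ‖H x‖ ≤ C) (s : ℝ)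
    (v : Fin m → ℝ) :
    ‖B.indicator H (syncChart s ν v)‖ ≤ (profileSet m 1).indicator (fun _ => C) v := by
  by_cases hmem : syncChart s ν v ∈ B
  · obtain ⟨hcube, hv⟩ := (syncChart_mem_syncSet_iff hν v).mp (hB hmem)
    rw [indicator_of_mem hmem, indicator_of_mem hv]
    exact hC _ hcube
  · rw [indicator_of_notMem hmem, norm_zero]
    exact indicator_nonneg (fun _ _ => (norm_nonneg _).trans (hC 0 fun _ => by simp)) v

theorem indicator_syncChart_eq_zero {B : Set (Fin (m + 1) → ℝ)} {s ν : ℝ}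
    (hB : B ⊆ syncSet (m + 1) ν) (hs : s ∉ Icc 0 1) (v : Fin m → ℝ) :
    B.indicator H (syncChart s ν v) = 0 :=
  indicator_of_notMem (fun hmem => hs (by simpa [syncChart] using (hB hmem).1 0)) H

theorem tendsto_integral_indicator_syncChart (hH : Continuous H)
    (hAm : ∀ ν, MeasurableSet (A ν)) (hAs : ∀ ν, A ν ⊆ syncSet (m + 1) ν) {s r : ℝ} (hr : 0 < r)
    (hA : ∀ᵐ v, ∀ᶠ ν in 𝓝[>] 0, (syncChart s ν v ∈ A ν ↔ v ∈ profileSet m r)) :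
    Tendsto (fun ν => ∫ v, (A ν).indicator H (syncChart s ν v)) (𝓝[>] 0)
      (𝓝 (r ^ m * ((volume (profileSet m 1)).toReal * H fun _ => s))) := by
  obtain ⟨C, hC⟩ := (isCompact_unitCube (m + 1)).exists_bound_of_continuousOn
    hH.continuousOn
  have hlimit : ∫ v, (profileSet m r).indicator (fun _ => H fun _ => s) v =
      r ^ m * ((volume (profileSet m 1)).toReal * H fun _ => s) := by
    rw [integral_indicator_const _ (isClosed_profileSet m r).measurableSet, measureReal_def,
      volume_profileSet hr, ENNReal.toReal_mul, ENNReal.toReal_ofReal (pow_pos hr m).le,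
      smul_eq_mul, mul_assoc]
  rw [← hlimit]
  refine tendsto_integral_filter_of_dominated_convergence _
    (Eventually.of_forall fun ν => ((hH.measurable.indicator (hAm ν)).comp
      ((measurable_syncChart ν).comp measurable_prodMk_left)).aestronglyMeasurable)
    (eventually_mem_nhdsWithin.mono fun ν hν =>
      ae_of_all _ (norm_indicator_syncChart_le hν (hAs ν) hC s))
    ((integrableOn_const (isCompact_profileSet m 1).measure_lt_top.ne).integrable_indicator
      (isClosed_profileSet m 1).measurableSet) ?_
  filter_upwards [hA] with v hv
  by_cases hvr : v ∈ profileSet m r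
  · rw [indicator_of_mem hvr]
    exact ((hH.tendsto _).comp (tendsto_syncChart s v)).congr'
      (hv.mono fun ν hν => (indicator_of_mem (hν.mpr hvr) H).symm)
  · rw [indicator_of_notMem hvr]
    exact tendsto_const_nhds.congr'
      (hv.mono fun ν hν => (indicator_of_notMem (fun h => hvr (hν.mp h)) H).symm)

theorem tendsto_integral_integral_indicator_syncChart (hH : Continuous H)
    (hAm : ∀ ν, MeasurableSet (A ν)) (hAs : ∀ ν, A ν ⊆ syncSet (m + 1) ν) {r : ℝ → ℝ}
    (hA : ∀ᵐ s ∂volume.restrict (Icc 0 1), 0 < r s ∧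
      ∀ᵐ v, ∀ᶠ ν in 𝓝[>] 0, (syncChart s ν v ∈ A ν ↔ v ∈ profileSet m (r s))) :
    Tendsto (fun ν => ∫ s, ∫ v, (A ν).indicator H (syncChart s ν v)) (𝓝[>] 0)
      (𝓝 ((volume (profileSet m 1)).toReal * ∫ s in Icc 0 1, r s ^ m * H fun _ => s)) := by
  obtain ⟨C, hC⟩ := (isCompact_unitCube (m + 1)).exists_bound_of_continuousOn
    hH.continuousOn
  set V := (volume (profileSet m 1)).toReal
  have hQ1 : Integrable ((profileSet m 1).indicator fun _ => C) :=
    (integrableOn_const (isCompact_profileSet m 1).measure_lt_top.ne).integrable_indicator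
      (isClosed_profileSet m 1).measurableSet
  have hbound (ν : ℝ) (hν : 0 < ν) (s : ℝ) :
      ‖∫ v, (A ν).indicator H (syncChart s ν v)‖ ≤ V * C := by
    refine (norm_integral_le_of_norm_le hQ1
      (ae_of_all _ (norm_indicator_syncChart_le hν (hAs ν) hC s))).trans_eq ?_
    rw [integral_indicator_const _ (isClosed_profileSet m 1).measurableSet, measureReal_def,
      smul_eq_mul]
  have hsupport : ∀ᶠ ν in 𝓝[>] 0, ∫ s in Icc 0 1, ∫ v, (A ν).indicator H (syncChart s ν v) =
      ∫ s, ∫ v, (A ν).indicator H (syncChart s ν v) :=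
    Eventually.of_forall fun ν => setIntegral_eq_integral_of_forall_compl_eq_zero fun s hs => by
      simp [indicator_syncChart_eq_zero (hAs ν) hs]
  rw [← integral_const_mul]
  simp_rw [mul_left_comm V]
  refine (tendsto_integral_filter_of_dominated_convergence (l := 𝓝[>] 0) (fun _ => V * C)
    (Eventually.of_forall fun ν => ?_)
    (eventually_mem_nhdsWithin.mono fun ν hν => ae_of_all _ (hbound ν hν))
    (integrable_const _) ?_).congr' hsupport
  · exact (((hH.measurable.indicator (hAm ν)).comp
      (measurable_syncChart ν)).aestronglyMeasurable.integral_prod_right').restrict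
  · filter_upwards [hA] with s hs
    exact tendsto_integral_indicator_syncChart hH hAm hAs hs.1 hs.2

end FiberLimit

section Partition

variable {T : ℝ → ℝ} {lam : ℝ} {q : ℕ} {a : ℕ → ℝ}

def partitionInterior (q : ℕ) (a : ℕ → ℝ) : Set ℝ := ⋃ l < q, Ioo (a l) (a (l + 1))

theorem isOpen_partitionInterior (q : ℕ) (a : ℕ → ℝ) : IsOpen (partitionInterior q a) :=
  isOpen_biUnion fun _ _ => isOpen_Ioo

namespace PiecewiseC2Expanding

theorem hasDerivAt (hT : PiecewiseC2Expanding T lam q a) {s : ℝ}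
    (hs : s ∈ partitionInterior q a) : HasDerivAt T (deriv T s) s := by
  obtain ⟨-, -, -, -, -, hC2, -⟩ := hT
  obtain ⟨l, hl, hsl⟩ := mem_iUnion₂.mp hs
  obtain ⟨g, hg, hTg⟩ := hC2 l hl
  have hTg' : T =ᶠ[𝓝 s] g := eventuallyEq_of_mem (isOpen_Ioo.mem_nhds hsl) hTg
  exact ((hg.differentiable two_ne_zero).differentiableAt.congr_of_eventuallyEq hTg').hasDerivAt

theorem continuousOn (hT : PiecewiseC2Expanding T lam q a) :
    ContinuousOn T (partitionInterior q a) :=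
  fun _ hs => (hT.hasDerivAt hs).continuousAt.continuousWithinAt

theorem one_div_le_abs_deriv (hT : PiecewiseC2Expanding T lam q a) {s : ℝ}
    (hs : s ∈ partitionInterior q a) : 1 / lam ≤ |deriv T s| := by
  obtain ⟨-, -, -, -, -, -, hexp⟩ := hT
  obtain ⟨l, hl, hsl⟩ := mem_iUnion₂.mp hs
  exact hexp l hl s hsl

theorem ae_mem_partitionInterior (hT : PiecewiseC2Expanding T lam q a) :
    ∀ᵐ s ∂volume.restrict (Icc 0 1), s ∈ partitionInterior q a := by
  obtain ⟨-, ha0, haq, -⟩ := hT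
  have hnull : volume (a '' Iic q) = 0 := ((finite_Iic q).image a).measure_zero _
  refine (ae_restrict_iff' measurableSet_Icc).mpr
    ((measure_eq_zero_iff_ae_notMem.mp hnull).mono fun s hs hsI => ?_)
  have hne (l : ℕ) (hl : l ≤ q) : a l ≠ s := fun h => hs ⟨l, hl, h⟩
  obtain ⟨l, hl, hsl⟩ := exists_mem_Ioo_of_forall_ne (ha0 ▸ hsI.1)
    ((hsI.2.trans_eq haq.symm).lt_of_ne (hne q le_rfl).symm) fun l hl => hne l hl.le
  exact mem_iUnion₂.mpr ⟨l, hl, hsl⟩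

end PiecewiseC2Expanding

end Partition

section CoupledMap

variable {n : ℕ} {γ : ℝ} {T : ℝ → ℝ}

theorem coupledMap_sub (x : Fin n → ℝ) (i j : Fin n) :
    coupledMap n γ T x i - coupledMap n γ T x j = (1 - γ) * (T (x i) - T (x j)) := by
  simp only [coupledMap]
  ring

theorem mapsTo_coupledMap (hγ0 : 0 ≤ γ) (hγ1 : γ ≤ 1) (hT : MapsTo T (Icc 0 1) (Icc 0 1)) :
    MapsTo (coupledMap n γ T) (unitCube n) (unitCube n) := by
  intro x hx i
  have hTx (j : Fin n) : T (x j) ∈ Icc (0 : ℝ) 1 := hT (hx j)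
  have hn : (0 : ℝ) < n := Nat.cast_pos.mpr i.pos
  have hmean : (∑ j, T (x j)) / n ∈ Icc (0 : ℝ) 1 := by
    refine ⟨div_nonneg (Finset.sum_nonneg fun j _ => (hTx j).1) hn.le, (div_le_one hn).mpr ?_⟩
    simpa using Finset.sum_le_sum fun j (_ : j ∈ Finset.univ) => (hTx j).2
  have hconv := convex_Icc (0 : ℝ) 1 (hTx i) hmean (sub_nonneg.mpr hγ1) hγ0 (by ring)
  convert hconv using 1
  simp only [coupledMap, smul_eq_mul]
  ring

theorem mem_syncSet_inter_preimage_coupledMap_iff (hγ0 : 0 ≤ γ) (hγ1 : γ ≤ 1)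
    (hT : MapsTo T (Icc 0 1) (Icc 0 1)) {ν : ℝ} {x : Fin n → ℝ} :
    x ∈ syncSet n ν ∩ coupledMap n γ T ⁻¹' syncSet n ν ↔
      x ∈ syncSet n ν ∧ ∀ i j, i ≠ j → (1 - γ) * |T (x i) - T (x j)| ≤ ν := by
  refine and_congr_right fun hx => (and_iff_right (mapsTo_coupledMap hγ0 hγ1 hT hx.1)).trans ?_
  simp only [coupledMap_sub, abs_mul, abs_of_nonneg (sub_nonneg.mpr hγ1)]

theorem ContinuousOn.coupledMap {U : Set ℝ} (hT : ContinuousOn T U) :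
    ContinuousOn (coupledMap n γ T) (univ.pi fun _ => U) := by
  have hTi (i : Fin n) : ContinuousOn (fun x : Fin n → ℝ => T (x i)) (univ.pi fun _ => U) :=
    hT.comp (continuous_apply i).continuousOn fun x hx => hx i (mem_univ i)
  exact continuousOn_pi.mpr fun i => (continuousOn_const.mul (hTi i)).add
    (continuousOn_const.mul (continuousOn_finsetSum _ fun j _ => hTi j))

end CoupledMap

section Limits

variable {m : ℕ} {γ : ℝ} {T : ℝ → ℝ} {H : (Fin (m + 1) → ℝ) → ℝ}

theorem eventually_syncChart_mem_inter_preimage_coupledMap_iff (hγ0 : 0 ≤ γ) (hγ1 : γ ≤ 1)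
    (hT : MapsTo T (Icc 0 1) (Icc 0 1)) {s d : ℝ} (hd : HasDerivAt T d s)
    (hK : 1 ≤ (1 - γ) * |d|) (hs : s ∈ Ioo 0 1) {Ω : Set (Fin (m + 1) → ℝ)} (hΩ : IsOpen Ω)
    (hsΩ : (fun _ => s) ∈ Ω) {v : Fin m → ℝ}
    (hv : ∀ i j, |offsets v i - offsets v j| ≠ ((1 - γ) * |d|)⁻¹) :
    ∀ᶠ ν in 𝓝[>] 0, (syncChart s ν v ∈
        syncSet (m + 1) ν ∩ coupledMap (m + 1) γ T ⁻¹' syncSet (m + 1) ν ∩ Ω ↔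
      v ∈ profileSet m ((1 - γ) * |d|)⁻¹) := by
  set K := (1 - γ) * |d|
  have hK0 : 0 < K := one_pos.trans_le hK
  have hprofile (w : Fin m → ℝ) :
      w ∈ profileSet m K⁻¹ ↔ ∀ i j, K * |offsets w i - offsets w j| ≤ 1 :=
    forall₂_congr fun i j => by rw [← one_div, le_div_iff₀' hK0]
  have hrate (i j : Fin (m + 1)) :
      Tendsto (fun ν => (1 - γ) * |T (syncChart s ν v i) - T (syncChart s ν v j)| / ν) (𝓝[>] 0)
        (𝓝 (K * |offsets v i - offsets v j|)) := by
    have hlim := ((hd.tendsto_sub_div (offsets v i) (offsets v j)).abs.const_mul (1 - γ))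
    rw [abs_mul, ← mul_assoc] at hlim
    refine hlim.congr' (eventually_mem_nhdsWithin.mono fun ν (hν : 0 < ν) => ?_)
    rw [abs_div, abs_of_pos hν, ← mul_div_assoc]
    rfl
  have hcompare (i j : Fin (m + 1)) := eventually_le_iff_of_tendsto (hrate i j)
    fun h => hv i j (eq_inv_of_mul_eq_one_right h)
  filter_upwards [eventually_all.mpr fun i => eventually_all.mpr (hcompare i),
    tendsto_syncChart s v (hΩ.mem_nhds hsΩ), eventually_syncChart_mem_unitCube hs v,
    eventually_mem_nhdsWithin] with ν hcmp (hνΩ : syncChart s ν v ∈ Ω) hcube (hν : 0 < ν)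
  rw [mem_inter_iff, mem_syncSet_inter_preimage_coupledMap_iff hγ0 hγ1 hT,
    syncChart_mem_syncSet_iff hν, hprofile]
  simp only [hcube, hνΩ, true_and, and_true]
  constructor
  · rintro ⟨-, hpairs⟩ i j
    rcases eq_or_ne i j with rfl | hij
    · simp
    · exact (hcmp i j).mp ((div_le_one hν).mpr (hpairs i j hij))
  · intro hpairs
    refine ⟨fun i j => ?_, fun i j _ => (div_le_one hν).mp ((hcmp i j).mpr (hpairs i j))⟩
    exact (le_mul_of_one_le_left (abs_nonneg _) hK).trans (hpairs i j)

theorem PiecewiseC2Expanding.measurableSet_syncSet_inter_preimage_coupledMap_inter {lam : ℝ}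
    {q : ℕ} {a : ℕ → ℝ} (hpw : PiecewiseC2Expanding T lam q a) (n : ℕ) (ν : ℝ) :
    MeasurableSet (syncSet n ν ∩ coupledMap n γ T ⁻¹' syncSet n ν ∩
      univ.pi fun _ => partitionInterior q a) := by
  rw [inter_assoc, inter_comm _ (univ.pi _)]
  exact (isClosed_syncSet n ν).measurableSet.inter
    (hpw.continuousOn.coupledMap.measurableSet_inter_preimage
      (isOpen_set_pi finite_univ fun _ _ => isOpen_partitionInterior q a) (isClosed_syncSet n ν))

theorem tendsto_integral_integral_numerator {lam : ℝ} {q : ℕ} {a : ℕ → ℝ}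
    (hpw : PiecewiseC2Expanding T lam q a) (hlam : 0 < lam) (hγ0 : 0 ≤ γ) (hlamγ : lam < 1 - γ)
    (hT : MapsTo T (Icc 0 1) (Icc 0 1)) (hH : Continuous H) :
    Tendsto (fun ν => ∫ s, ∫ v, (syncSet (m + 1) ν ∩ coupledMap (m + 1) γ T ⁻¹' syncSet (m + 1) ν ∩
        univ.pi fun _ => partitionInterior q a).indicator H (syncChart s ν v)) (𝓝[>] 0)
      (𝓝 ((volume (profileSet m 1)).toReal *
        (((1 - γ) ^ m)⁻¹ * ∫ s in Icc 0 1, (H fun _ => s) / |deriv T s| ^ m))) := by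
  have hγ1 : γ ≤ 1 := by linarith
  have hfactor : ∫ s in Icc 0 1, ((1 - γ) * |deriv T s|)⁻¹ ^ m * H (fun _ => s) =
      ((1 - γ) ^ m)⁻¹ * ∫ s in Icc 0 1, H (fun _ => s) / |deriv T s| ^ m := by
    rw [← integral_const_mul]
    congr with s
    rw [mul_inv]
    ring
  rw [← hfactor]
  refine tendsto_integral_integral_indicator_syncChart hH
    (hpw.measurableSet_syncSet_inter_preimage_coupledMap_inter _)
    (fun ν => inter_subset_left.trans inter_subset_left) ?_
  filter_upwards [hpw.ae_mem_partitionInterior, ae_restrict_Icc_mem_Ioo 0 1] with s hsU hs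
  have hK : 1 ≤ (1 - γ) * |deriv T s| := calc
    1 ≤ (1 - γ) * (1 / lam) := by rw [mul_one_div, le_div_iff₀ hlam]; linarith
    _ ≤ (1 - γ) * |deriv T s| :=
      mul_le_mul_of_nonneg_left (hpw.one_div_le_abs_deriv hsU) (by linarith)
  have hr : 0 < ((1 - γ) * |deriv T s|)⁻¹ := inv_pos.mpr (one_pos.trans_le hK)
  refine ⟨hr, (ae_abs_offsets_sub_ne hr.ne').mono fun v hv => ?_⟩
  exact eventually_syncChart_mem_inter_preimage_coupledMap_iff hγ0 hγ1 hT (hpw.hasDerivAt hsU) hK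
    hs (isOpen_set_pi finite_univ fun _ _ => isOpen_partitionInterior q a) (fun _ _ => hsU) hv

theorem tendsto_integral_integral_denominator (hH : Continuous H) :
    Tendsto (fun ν => ∫ s, ∫ v, (syncSet (m + 1) ν).indicator H (syncChart s ν v)) (𝓝[>] 0)
      (𝓝 ((volume (profileSet m 1)).toReal * ∫ s in Icc 0 1, H fun _ => s)) := by
  have hA : ∀ᵐ s ∂volume.restrict (Icc 0 1), (0 : ℝ) < 1 ∧ ∀ᵐ v, ∀ᶠ ν in 𝓝[>] 0,
      (syncChart s ν v ∈ syncSet (m + 1) ν ↔ v ∈ profileSet m 1) := by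
    filter_upwards [ae_restrict_Icc_mem_Ioo 0 1] with s hs
    refine ⟨one_pos, ae_of_all _ fun v => ?_⟩
    filter_upwards [eventually_syncChart_mem_unitCube hs v, eventually_mem_nhdsWithin]
      with ν hcube hν
    rw [syncChart_mem_syncSet_iff hν, and_iff_right hcube]
  simpa using tendsto_integral_integral_indicator_syncChart hH
    (fun ν => (isClosed_syncSet _ ν).measurableSet) (fun _ => subset_rfl) hA

theorem tendsto_densityMeasure_sync_ratio {lam : ℝ} {q : ℕ} {a : ℕ → ℝ}
    (hpw : PiecewiseC2Expanding T lam q a) (hlam : 0 < lam) (hγ0 : 0 ≤ γ) (hlamγ : lam < 1 - γ)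
    (hT : MapsTo T (Icc 0 1) (Icc 0 1)) (hH : Continuous H) (hH0 : ∀ x, 0 ≤ H x)
    (hI : 0 < ∫ s in Icc 0 1, H fun _ => s) :
    Tendsto (fun ν => (densityMeasure (m + 1) H
          (syncSet (m + 1) ν ∩ coupledMap (m + 1) γ T ⁻¹' syncSet (m + 1) ν)).toReal /
        (densityMeasure (m + 1) H (syncSet (m + 1) ν)).toReal) (𝓝[>] 0)
      (𝓝 (((1 - γ) ^ m)⁻¹ *
        ((∫ s in Icc 0 1, (H fun _ => s) / |deriv T s| ^ m) / ∫ s in Icc 0 1, H fun _ => s))) := by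
  have hV : 0 < (volume (profileSet m 1)).toReal := ENNReal.toReal_pos
    (volume_profileSet_one_pos m).ne' (isCompact_profileSet m 1).measure_lt_top.ne
  have hlim := (tendsto_integral_integral_numerator hpw hlam hγ0 hlamγ hT hH).div
    (tendsto_integral_integral_denominator hH) (mul_pos hV hI).ne'
  rw [mul_div_mul_left _ _ hV.ne', mul_div_assoc] at hlim
  refine hlim.congr' (eventually_mem_nhdsWithin.mono fun ν (hν : 0 < ν) => ?_)
  simp only [Pi.div_apply]
  -- Cutting the numerator set down to the conull open set where `coupledMap` is continuous
  -- makes it measurable.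
  rw [← densityMeasure_inter_of_ae_mem _ _
      (ae_restrict_unitCube_mem_pi hpw.ae_mem_partitionInterior),
    densityMeasure_toReal_eq_pow_mul_integral_syncChart hH hH0
      (hpw.measurableSet_syncSet_inter_preimage_coupledMap_inter _ ν)
      (inter_subset_left.trans (inter_subset_left.trans inter_subset_left)) hν,
    densityMeasure_toReal_eq_pow_mul_integral_syncChart hH hH0
      (isClosed_syncSet _ ν).measurableSet inter_subset_left hν,
    mul_div_mul_left _ _ (pow_pos hν m).ne']

end Limits

theorem sync_ratio_tendsto_of_continuous_general
    (n : ℕ) (hn : 2 ≤ n) (lam γ : ℝ)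
    (hlam : lam ∈ Ioo (0:ℝ) 1) (hγ : γ ∈ Ico (0:ℝ) 1) (hlamγ : lam < 1 - γ)
    (T : ℝ → ℝ) (hT : Set.MapsTo T (Icc 0 1) (Icc 0 1))
    (hpw : ∃ q a, PiecewiseC2Expanding T lam q a)
    (h : (Fin n → ℝ) → ℝ) (hcont : ContinuousOn h (unitCube n))
    (c : ℝ) (hc : 0 < c) (hinf : ∀ x ∈ unitCube n, c ≤ h x) :
    Filter.Tendsto
      (fun ν : ℝ =>
        ((densityMeasure n h)
            (syncSet n ν ∩ (coupledMap n γ T) ⁻¹' (syncSet n ν))).toReal /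
          ((densityMeasure n h) (syncSet n ν)).toReal)
      (nhdsWithin 0 (Ioi 0))
      (nhds (((1 - γ) ^ (n - 1))⁻¹ *
        ((∫ x in Icc (0:ℝ) 1, h (fun _ => x) / |deriv T x| ^ (n - 1)) /
          (∫ x in Icc (0:ℝ) 1, h (fun _ => x))))) := by
  obtain ⟨m, rfl⟩ : ∃ m, n = m + 1 := ⟨n - 1, by omega⟩
  obtain ⟨q, a, hpw⟩ := hpw
  obtain ⟨H, hH, hhH, hHh⟩ := hcont.exists_continuous_eqOn_unitCube
  have hcH (x) : c ≤ H x := by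
    obtain ⟨y, hy, hxy⟩ := hHh x
    exact hxy ▸ hinf y hy
  have hdiag : EqOn (fun s => h fun _ => s) (fun s => H fun _ => s) (Icc 0 1) :=
    fun s hs => hhH fun _ => hs
  have hI : 0 < ∫ s in Icc 0 1, H fun _ => s := hc.trans_le <| by
    simpa using setIntegral_ge_of_const_le_real (μ := volume) (measurableSet_Icc (a := 0) (b := 1))
      (by simp)
      (fun s _ => hcH _) (by fun_prop : Continuous fun s : ℝ => H fun _ => s).integrableOn_Icc
  simp only [Nat.add_sub_cancel, densityMeasure_congr hhH,
    setIntegral_congr_fun measurableSet_Icc hdiag,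
    setIntegral_congr_fun measurableSet_Icc fun s hs => congrArg (· / |deriv T s| ^ m) (hdiag hs)]
  exact tendsto_densityMeasure_sync_ratio hpw hlam.1 hγ.1 hlamγ hT hH
    (fun x => hc.le.trans (hcH x)) hI

/-- for a continuous density `h` bounded below away from zero, the ratio
`μ(S_ν ∩ T̂⁻¹ S_ν) / μ(S_ν)` converges, as `ν → 0⁺`, to
`(1−γ)^{−(n−1)} · (∫₀¹ h(x,…,x)·|T'(x)|^{−(n−1)} dx) / (∫₀¹ h(x,…,x) dx)`.
(Here `deriv T` is meaningfully defined at Lebesgue-almost every `x ∈ [0,1]`, namely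
at all interior points of the partition intervals of `T`.) -/
theorem sync_ratio_tendsto_of_continuous
    (n : ℕ) (hn : 2 ≤ n) (lam γ : ℝ)
    (hlam : lam ∈ Ioo (0:ℝ) 1) (hγ : γ ∈ Ico (0:ℝ) 1) (hlamγ : lam < 1 - γ)
    (T : ℝ → ℝ) (hT : Set.MapsTo T (Icc 0 1) (Icc 0 1))
    (hpw : ∃ q a, PiecewiseC2Expanding T lam q a)
    (h : (Fin n → ℝ) → ℝ) (hcont : ContinuousOn h (unitCube n))
    (hnonneg : ∀ x ∈ unitCube n, 0 ≤ h x)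
    (c : ℝ) (hc : 0 < c) (hinf : ∀ x ∈ unitCube n, c ≤ h x) :
    Filter.Tendsto
      (fun ν : ℝ =>
        ((densityMeasure n h)
            (syncSet n ν ∩ (coupledMap n γ T) ⁻¹' (syncSet n ν))).toReal /
          ((densityMeasure n h) (syncSet n ν)).toReal)
      (nhdsWithin 0 (Ioi 0))
      (nhds (((1 - γ) ^ (n - 1))⁻¹ *
        ((∫ x in Icc (0:ℝ) 1, h (fun _ => x) / |deriv T x| ^ (n - 1)) /
          (∫ x in Icc (0:ℝ) 1, h (fun _ => x))))) :=
  sync_ratio_tendsto_of_continuous_general n hn lam γ hlam hγ hlamγ T hT hpw h hcont c hc hinf
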